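/- arXiv:2211.06245 — 2 statements merged into one kernel-verified Lean document; each statement's English description precedes it below -/
import Mathlib

section
/- Let H = (V, E) be a k-uniform hypergraph on n vertices with EI(H) = C_n. Then |E| ≥ 3n/k. -/
open Finset

/-- Edge intersection hypergraph of a hypergraph with edge set `E` on vertex set `Fin n`. -/
def EIh {n : ℕ} (E : Finset (Finset (Fin n))) : Finset (Finset (Fin n)) :=
  ((E ×ˢ E).filter fun p => p.1 ≠ p.2 ∧ 2 ≤ (p.1 ∩ p.2).card).image fun p => p.1 ∩ p.2

/-- The edge set of the cycle `C_n` on vertex set `Fin n`. -/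
def cyc (n : ℕ) [NeZero n] : Finset (Finset (Fin n)) :=
  Finset.univ.image fun i : Fin n => ({i, i + 1} : Finset (Fin n))

/-- Degree of a vertex in a hypergraph. -/
def hdeg {n : ℕ} (E : Finset (Finset (Fin n))) (v : Fin n) : ℕ :=
  (E.filter fun e => v ∈ e).card

/-!
Every vertex `v` of `C_n` lies on the two distinct edges `{v - 1, v}` and `{v, v + 1}`, and each
of them is the intersection of two distinct hyperedges, all four containing `v`. Two different
intersections cannot come from the same pair of hyperedges, so at least three of the four are
distinct and every vertex has degree at least `3`. Double counting vertex–hyperedge incidences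
gives `3 n ≤ ∑ v, deg v = ∑ e, |e| = |E| k`.
-/

lemma Finset.three_le_card_of_pair_ne_pair {α : Type*} [DecidableEq α] {a b c d : α}
    (hab : a ≠ b) (hcd : c ≠ d) (hne : ({a, b} : Finset α) ≠ {c, d}) : 3 ≤ #{a, b, c, d} := by
  by_contra! hlt
  have hab_eq : ({a, b} : Finset α) = {a, b, c, d} :=
    eq_of_subset_of_card_le (insert_subset_insert a (by simp)) (by rw [card_pair hab]; omega)
  have hcd_sub : ({c, d} : Finset α) ⊆ {a, b} := by
    rw [hab_eq]; intro x; simp +contextual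
  exact hne (eq_of_subset_of_card_le hcd_sub (by rw [card_pair hab, card_pair hcd])).symm

lemma inf_eq_inf_of_pair_eq {α : Type*} [SemilatticeInf α] [OrderTop α] [DecidableEq α]
    {a b c d : α} (h : ({a, b} : Finset α) = {c, d}) : a ⊓ b = c ⊓ d := by
  simpa using congrArg (fun s => s.inf id) h

lemma pair_sub_one_ne_pair_add_one {R : Type*} [CommRing R] [DecidableEq R] (h2 : (2 : R) ≠ 0)
    (v : R) : ({v - 1, v} : Finset R) ≠ {v, v + 1} := by
  intro h
  have hmem : v + 1 ∈ ({v - 1, v} : Finset R) := h ▸ by simp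
  rcases mem_insert.1 hmem with h' | h'
  · exact h2 (by linear_combination h')
  · exact h2 (by linear_combination 2 * mem_singleton.1 h')

lemma exists_inter_eq_of_mem_EIh {n : ℕ} {E : Finset (Finset (Fin n))} {s : Finset (Fin n)}
    (hs : s ∈ EIh E) : ∃ a ∈ E, ∃ b ∈ E, a ≠ b ∧ a ∩ b = s := by
  simp only [EIh, mem_image, mem_filter, mem_product] at hs
  obtain ⟨⟨a, b⟩, ⟨⟨ha, hb⟩, hab, -⟩, rfl⟩ := hs
  exact ⟨a, ha, b, hb, hab, rfl⟩

lemma pair_mem_cyc {n : ℕ} [NeZero n] (i : Fin n) : ({i, i + 1} : Finset (Fin n)) ∈ cyc n :=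
  mem_image_of_mem _ (mem_univ i)

open Fin.CommRing in
lemma three_le_hdeg_of_EIh_eq_cyc {n : ℕ} [NeZero n] (hn : 3 ≤ n) {E : Finset (Finset (Fin n))}
    (hEI : EIh E = cyc n) (v : Fin n) : 3 ≤ hdeg E v := by
  obtain ⟨a, ha, b, hb, hab, habv⟩ :=
    exists_inter_eq_of_mem_EIh (hEI ▸ sub_add_cancel v 1 ▸ pair_mem_cyc (v - 1))
  obtain ⟨c, hc, d, hd, hcd, hcdv⟩ := exists_inter_eq_of_mem_EIh (hEI ▸ pair_mem_cyc v)
  have h2 : (2 : Fin n) ≠ 0 := by simp [Fin.ext_iff, Nat.mod_eq_of_lt (show 2 < n by omega)]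
  have hne : ({a, b} : Finset (Finset (Fin n))) ≠ {c, d} := fun h =>
    pair_sub_one_ne_pair_add_one h2 v (by rw [← habv, ← hcdv]; exact inf_eq_inf_of_pair_eq h)
  have hsub : ({a, b, c, d} : Finset (Finset (Fin n))) ⊆ E.filter (v ∈ ·) := by
    obtain ⟨hva, hvb⟩ := mem_inter.1 (habv ▸ mem_insert_of_mem (mem_singleton_self v))
    obtain ⟨hvc, hvd⟩ := mem_inter.1 (hcdv ▸ mem_insert_self v {v + 1})
    simp [insert_subset_iff, *]
  exact (three_le_card_of_pair_ne_pair hab hcd hne).trans (card_le_card hsub)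

lemma mul_card_le_card_mul_of_le_hdeg {n k m : ℕ} {E : Finset (Finset (Fin n))}
    (hunif : ∀ e ∈ E, #e = k) (hdeg_ge : ∀ v, m ≤ hdeg E v) : m * n ≤ #E * k := by
  have hcount := sum_card_bipartiteAbove_eq_sum_card_bipartiteBelow (s := univ) (t := E)
    (r := fun v e => v ∈ e)
  simp only [bipartiteAbove, bipartiteBelow, subset_univ, filter_mem_eq_of_subset] at hcount
  calc m * n = ∑ _v : Fin n, m := by simp [mul_comm]
    _ ≤ ∑ v, hdeg E v := sum_le_sum fun v _ => hdeg_ge v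
    _ = ∑ e ∈ E, #e := hcount
    _ = #E * k := by rw [sum_congr rfl hunif, sum_const, smul_eq_mul]

theorem stmt_2 (n k : ℕ) [NeZero n] (hn : 3 ≤ n) (E : Finset (Finset (Fin n)))
    (hunif : ∀ e ∈ E, e.card = k) (hEI : EIh E = cyc n) :
    3 * n ≤ E.card * k :=
  mul_card_le_card_mul_of_le_hdeg hunif (three_le_hdeg_of_EIh_eq_cyc hn hEI)
end

section
/- Let n ≥ 21 with n ≡ 0 (mod 3). The 5-uniform hypergraph H on V = {1,...,n} with hyperedges E = { {i, i+1, i+2, i+8, i+9} : i ∈ {1, 4, 7, ..., n−2} } ∪ { {i, i+1, i+2, i+5, i+6} : i ∈ {2, 5, 8, ..., n−1} } (indices mod n) satisfies EI(H) = C_n, consists entirely of (3,2)-hyperedges, and has |E| = 2n/3. -/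
open Finset
open Fin.NatCast

/-- `e` is a (3,2)-hyperedge: one maximal run of 3 consecutive cycle vertices and one
disjoint maximal run of 2 consecutive cycle vertices. -/
def IsSection32 {n : ℕ} [NeZero n] (e : Finset (Fin n)) : Prop :=
  ∃ i j : Fin n, e = {i, i + 1, i + 2, j, j + 1} ∧ e.card = 5 ∧
    (i - 1) ∉ e ∧ (i + 3) ∉ e ∧ (j - 1) ∉ e ∧ (j + 2) ∉ e

/-!
Write `section32 x d = {x, x+1, x+2, x+d, x+d+1}`, so that the hyperedges are `section32 x 8` for
`x ≡ 1` and `section32 y 5` for `y ≡ 2 (mod 3)`. Comparing offsets, distinct hyperedges of the same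
gap share at most one vertex, while `section32 x 8` and `section32 y 5` share two vertices exactly
when `y = x + 1`, `y = x + 7` or `x = y + 5`, and then they share the cycle edge `{y, y+1}`,
`{x+8, x+9}` resp. `{x, x+1}`. The first vertex `m` of that cycle edge is `≡ 2`, `0` resp. `1`
(mod 3), so every cycle edge arises. All arithmetic is done on representatives in `[0, n)`;
`n ≥ 21` rules out coincidences by wrap-around.
-/

theorem mem_EIh {n : ℕ} {E : Finset (Finset (Fin n))} {f : Finset (Fin n)} :
    f ∈ EIh E ↔ ∃ e₁ ∈ E, ∃ e₂ ∈ E, e₁ ≠ e₂ ∧ 2 ≤ #(e₁ ∩ e₂) ∧ e₁ ∩ e₂ = f := by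
  simp only [EIh, mem_image, mem_filter, mem_product, Prod.exists, and_assoc,
    exists_and_left]

theorem card_filter_range_mod_eq {n k r : ℕ} (hk : k ∣ n) (hr : r < k) :
    #{i ∈ range n | i % k = r} = n / k := by
  simpa [Nat.count_eq_card_filter_range, Nat.ModEq, Nat.mod_eq_of_lt hr,
    Nat.mod_eq_zero_of_dvd hk] using Nat.count_modEq_card n (r := k) (by omega) r

namespace Fin

variable {n : ℕ} [NeZero n]

theorem eq_add_natCast_iff {x y : Fin n} {c : ℕ} (hc : c < n) :
    y = x + (c : Fin n) ↔ x.val + c = y.val ∨ x.val + c = y.val + n := by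
  rw [Fin.ext_iff, Fin.val_add_eq_ite, Fin.val_cast_of_lt hc]
  have := y.isLt
  split_ifs <;> omega

-- Numerals `x + 8` are not syntactically `x + ((8 : ℕ) : Fin n)`, so they need their own form.
theorem eq_add_ofNat_iff {x y : Fin n} {c : ℕ} (hc : (OfNat.ofNat c : ℕ) < n) :
    y = x + (OfNat.ofNat c : Fin n) ↔
      x.val + (OfNat.ofNat c : ℕ) = y.val ∨ x.val + (OfNat.ofNat c : ℕ) = y.val + n :=
  eq_add_natCast_iff hc

theorem mem_pair_add_one_iff {m v : Fin n} (hn : 1 < n) :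
    v ∈ ({m, m + 1} : Finset (Fin n)) ↔
      m.val = v.val ∨ m.val + 1 = v.val ∨ m.val + 1 = v.val + n := by
  rw [mem_insert, mem_singleton, eq_add_ofNat_iff hn, Fin.ext_iff, eq_comm]

theorem exists_range_natCast_iff {α : Type*} {p : ℕ → Prop} {f : Fin n → α} {a : α} :
    (∃ i, (i < n ∧ p i) ∧ f (i : Fin n) = a) ↔ ∃ x : Fin n, p x.val ∧ f x = a :=
  ⟨fun ⟨i, ⟨hi, hp⟩, h⟩ => ⟨i, by rwa [val_cast_of_lt hi], h⟩,
    fun ⟨x, hp, h⟩ => ⟨x.val, ⟨x.isLt, hp⟩, by rwa [cast_val_eq_self]⟩⟩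

end Fin

section

variable {n : ℕ} [NeZero n]

def section32 (x : Fin n) (d : ℕ) : Finset (Fin n) :=
  ({0, 1, 2, d, d + 1} : Finset ℕ).image fun k : ℕ => x + (k : Fin n)

theorem mem_section32 {x v : Fin n} {d : ℕ} (hn : 2 < n) (hd : d + 1 < n) :
    v ∈ section32 x d ↔ ∃ k ∈ ({0, 1, 2, d, d + 1} : Finset ℕ),
      x.val + k = v.val ∨ x.val + k = v.val + n := by
  simp only [section32, mem_image, eq_comm (b := v)]
  refine exists_congr fun k => and_congr_right fun hk => Fin.eq_add_natCast_iff ?_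
  simp only [mem_insert, mem_singleton] at hk
  omega

theorem card_section32 (x : Fin n) {d : ℕ} (hd : 3 ≤ d) (hdn : d + 2 ≤ n) :
    #(section32 x d) = 5 := by
  have hS : ∀ k ∈ ({0, 1, 2, d, d + 1} : Finset ℕ), k < n := by
    simp only [mem_insert, mem_singleton]
    omega
  rw [section32, card_image_of_injOn fun a ha b hb hab => ?_]
  · rw [card_insert_of_notMem, card_insert_of_notMem, card_insert_of_notMem, card_pair] <;>
      simp only [mem_insert, mem_singleton, not_or, ne_eq] <;> omega
  · rw [← Fin.val_cast_of_lt (hS a ha), ← Fin.val_cast_of_lt (hS b hb), add_left_cancel hab]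

theorem isSection32_section32 (x : Fin n) {d : ℕ} (hd : 4 ≤ d) (hdn : d + 3 ≤ n) :
    IsSection32 (section32 x d) := by
  set y := x + (d : Fin n) with hy
  have := (Fin.eq_add_natCast_iff (by omega)).1 hy
  have hmem (v : Fin n) := mem_section32 (x := x) (v := v) (d := d) (by omega) (by omega)
  simp only [mem_insert, mem_singleton, exists_eq_or_imp, exists_eq_left] at hmem
  refine ⟨x, y, by simp [y, section32, image_insert, add_assoc],
    card_section32 x (by omega) (by omega), ?_, ?_, ?_, ?_⟩ <;> rw [hmem]
  · have := (Fin.eq_add_ofNat_iff (by omega)).1 (sub_add_cancel x 1).symm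
    omega
  · have := (Fin.eq_add_ofNat_iff (y := x + 3) (by omega)).1 rfl
    omega
  · have := (Fin.eq_add_ofNat_iff (by omega)).1 (sub_add_cancel y 1).symm
    omega
  · have := (Fin.eq_add_ofNat_iff (y := y + 2) (by omega)).1 rfl
    omega

theorem eq_of_two_le_card_inter_section32 {x x' : Fin n} {d : ℕ} (hmod : n % 3 = 0)
    (hd : d % 3 = 2) (hdn : 2 * d + 3 ≤ n) (hx : x.val % 3 = x'.val % 3)
    (h : 2 ≤ #(section32 x d ∩ section32 x' d)) : x = x' := by
  obtain ⟨v, hv, w, hw, hvw⟩ := one_lt_card.1 h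
  simp only [mem_inter, mem_section32 (show 2 < n by omega) (show d + 1 < n by omega),
    mem_insert, mem_singleton, exists_eq_or_imp, exists_eq_left] at hv hw
  have := v.isLt; have := w.isLt; have := x.isLt; have := x'.isLt
  have := Fin.val_ne_of_ne hvw
  rw [Fin.ext_iff]
  omega

theorem injOn_section32 {d r : ℕ} (hmod : n % 3 = 0) (hd₃ : 3 ≤ d) (hd : d % 3 = 2)
    (hdn : 2 * d + 3 ≤ n) :
    Set.InjOn (fun i : ℕ => section32 (i : Fin n) d) ({i ∈ range n | i % 3 = r} : Finset ℕ) := by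
  intro i hi j hj hij
  simp only [mem_coe, mem_filter, mem_range] at hi hj
  have hcard : 2 ≤ #(section32 (i : Fin n) d ∩ section32 (j : Fin n) d) := by
    rw [show section32 (i : Fin n) d = section32 (j : Fin n) d from hij, inter_self,
      card_section32 _ hd₃ (by omega)]
    norm_num
  have := eq_of_two_le_card_inter_section32 hmod hd hdn
    (by rw [Fin.val_cast_of_lt hi.1, Fin.val_cast_of_lt hj.1]; omega) hcard
  rwa [← Fin.val_cast_of_lt hi.1, ← Fin.val_cast_of_lt hj.1, Fin.val_inj]

def OverlapsAt (x y m : Fin n) : Prop :=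
  (m = x + 1 ∧ m = y) ∨ (m = x + 8 ∧ m = y + 1) ∨ (m = x ∧ m = y + 5)

theorem OverlapsAt.inter_eq {x y m : Fin n} (h : OverlapsAt x y m) (hn : 21 ≤ n) :
    section32 x 8 ∩ section32 y 5 = {m, m + 1} := by
  simp only [OverlapsAt, Fin.eq_add_ofNat_iff (show 1 < n by omega),
    Fin.eq_add_ofNat_iff (show 8 < n by omega), Fin.eq_add_ofNat_iff (show 5 < n by omega),
    Fin.ext_iff] at h
  ext v
  simp only [Fin.mem_pair_add_one_iff (show 1 < n by omega), mem_inter,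
    mem_section32 (show 2 < n by omega) (show 8 + 1 < n by omega),
    mem_section32 (show 2 < n by omega) (show 5 + 1 < n by omega), mem_insert, mem_singleton,
    exists_eq_or_imp, exists_eq_left]
  have := v.isLt; have := x.isLt; have := y.isLt; have := m.isLt
  omega

theorem exists_overlapsAt {x y : Fin n} (hn : 21 ≤ n) (hmod : n % 3 = 0)
    (hx : x.val % 3 = 1) (hy : y.val % 3 = 2) (h : 2 ≤ #(section32 x 8 ∩ section32 y 5)) :
    ∃ m, OverlapsAt x y m := by
  obtain ⟨v, hv, w, hw, hvw⟩ := one_lt_card.1 h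
  simp only [mem_inter, mem_section32 (show 2 < n by omega) (show 8 + 1 < n by omega),
    mem_section32 (show 2 < n by omega) (show 5 + 1 < n by omega), mem_insert, mem_singleton,
    exists_eq_or_imp, exists_eq_left] at hv hw
  have := v.isLt; have := w.isLt; have := x.isLt; have := y.isLt
  have := Fin.val_ne_of_ne hvw
  have hxy : (x.val + 1 = y.val ∨ x.val + 1 = y.val + n) ∨
      (x.val + 7 = y.val ∨ x.val + 7 = y.val + n) ∨
      (y.val + 5 = x.val ∨ y.val + 5 = x.val + n) := by
    omega
  rcases hxy with h | h | h
  · exact ⟨y, Or.inl ⟨(Fin.eq_add_ofNat_iff (by omega)).2 h, rfl⟩⟩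
  · -- naming `y + 1` keeps `omega` from reading `(y + 1).val` as an opaque `(y.val + 1) % n`
    obtain ⟨m, hm⟩ : ∃ m : Fin n, m = y + 1 := ⟨_, rfl⟩
    have := (Fin.eq_add_ofNat_iff (by omega)).1 hm
    exact ⟨m, Or.inr (Or.inl ⟨(Fin.eq_add_ofNat_iff (by omega)).2 (by omega), hm⟩)⟩
  · exact ⟨x, Or.inr (Or.inr ⟨rfl, (Fin.eq_add_ofNat_iff (by omega)).2 h⟩)⟩

theorem section32_eight_ne_five {x y : Fin n} (hn : 21 ≤ n) (hmod : n % 3 = 0)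
    (hx : x.val % 3 = 1) (hy : y.val % 3 = 2) : section32 x 8 ≠ section32 y 5 := by
  intro h
  have hcard : #(section32 x 8 ∩ section32 y 5) = 5 := by
    rw [h, inter_self, card_section32 y (by norm_num) (by omega)]
  obtain ⟨m, hm⟩ := exists_overlapsAt hn hmod hx hy (by omega)
  have := card_le_two (a := m) (b := m + 1)
  rw [← hm.inter_eq hn] at this
  omega

def hyperedges (n : ℕ) [NeZero n] : Finset (Finset (Fin n)) :=
  {i ∈ range n | i % 3 = 1}.image (fun i : ℕ => section32 (i : Fin n) 8) ∪
    {i ∈ range n | i % 3 = 2}.image (fun i : ℕ => section32 (i : Fin n) 5)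

theorem hyperedges_eq :
    (((Finset.range n).filter fun i => i % 3 = 1).image fun i : ℕ =>
        ({(i : Fin n), ((i + 1 : ℕ) : Fin n), ((i + 2 : ℕ) : Fin n),
          ((i + 8 : ℕ) : Fin n), ((i + 9 : ℕ) : Fin n)} : Finset (Fin n))) ∪
      (((Finset.range n).filter fun i => i % 3 = 2).image fun i : ℕ =>
        ({(i : Fin n), ((i + 1 : ℕ) : Fin n), ((i + 2 : ℕ) : Fin n),
          ((i + 5 : ℕ) : Fin n), ((i + 6 : ℕ) : Fin n)} : Finset (Fin n))) = hyperedges n := by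
  simp [hyperedges, section32, image_insert]

theorem mem_hyperedges {e : Finset (Fin n)} :
    e ∈ hyperedges n ↔ (∃ x : Fin n, x.val % 3 = 1 ∧ section32 x 8 = e) ∨
      ∃ y : Fin n, y.val % 3 = 2 ∧ section32 y 5 = e := by
  simp only [hyperedges, mem_union, mem_image, mem_filter, mem_range]
  exact or_congr (Fin.exists_range_natCast_iff (f := (section32 · 8)))
    (Fin.exists_range_natCast_iff (f := (section32 · 5)))

theorem EIh_hyperedges_subset_cyc (hn : 21 ≤ n) (hmod : n % 3 = 0) :
    EIh (hyperedges n) ⊆ cyc n := by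
  intro f hf
  obtain ⟨e₁, he₁, e₂, he₂, hne, hcard, rfl⟩ := mem_EIh.1 hf
  obtain ⟨m, hm⟩ : ∃ m, e₁ ∩ e₂ = {m, m + 1} := by
    rcases mem_hyperedges.1 he₁ with ⟨x, hx, rfl⟩ | ⟨x, hx, rfl⟩ <;>
      rcases mem_hyperedges.1 he₂ with ⟨y, hy, rfl⟩ | ⟨y, hy, rfl⟩
    · exact absurd (congrArg (section32 · 8)
        (eq_of_two_le_card_inter_section32 hmod rfl (by omega) (by omega) hcard)) hne
    · obtain ⟨m, hm⟩ := exists_overlapsAt hn hmod hx hy hcard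
      exact ⟨m, hm.inter_eq hn⟩
    · rw [inter_comm] at hcard ⊢
      obtain ⟨m, hm⟩ := exists_overlapsAt hn hmod hy hx hcard
      exact ⟨m, hm.inter_eq hn⟩
    · exact absurd (congrArg (section32 · 5)
        (eq_of_two_le_card_inter_section32 hmod rfl (by omega) (by omega) hcard)) hne
  rw [hm]
  exact mem_image_of_mem _ (mem_univ m)

theorem cyc_subset_EIh_hyperedges (hn : 21 ≤ n) (hmod : n % 3 = 0) :
    cyc n ⊆ EIh (hyperedges n) := by
  intro f hf
  obtain ⟨m, -, rfl⟩ := mem_image.1 hf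
  obtain ⟨x, y, hx, hy, hxy⟩ :
      ∃ x y : Fin n, x.val % 3 = 1 ∧ y.val % 3 = 2 ∧ OverlapsAt x y m := by
    obtain ⟨a, ha⟩ : ∃ a : Fin n, m = a + 1 := ⟨m - 1, (sub_add_cancel m 1).symm⟩
    obtain ⟨b, hb⟩ : ∃ b : Fin n, m = b + 8 := ⟨m - 8, (sub_add_cancel m 8).symm⟩
    obtain ⟨c, hc⟩ : ∃ c : Fin n, m = c + 5 := ⟨m - 5, (sub_add_cancel m 5).symm⟩
    have := (Fin.eq_add_ofNat_iff (by omega)).1 ha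
    have := (Fin.eq_add_ofNat_iff (by omega)).1 hb
    have := (Fin.eq_add_ofNat_iff (by omega)).1 hc
    have := m.isLt; have := a.isLt; have := b.isLt; have := c.isLt
    rcases (by omega : m.val % 3 = 0 ∨ m.val % 3 = 1 ∨ m.val % 3 = 2) with h | h | h
    · exact ⟨b, a, by omega, by omega, Or.inr (Or.inl ⟨hb, ha⟩)⟩
    · exact ⟨m, c, h, by omega, Or.inr (Or.inr ⟨rfl, hc⟩)⟩
    · exact ⟨a, m, by omega, h, Or.inl ⟨ha, rfl⟩⟩
  have hm : m ≠ m + 1 := by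
    rw [Ne, Fin.eq_add_ofNat_iff (by omega)]
    omega
  exact mem_EIh.2 ⟨_, mem_hyperedges.2 (Or.inl ⟨x, hx, rfl⟩), _,
    mem_hyperedges.2 (Or.inr ⟨y, hy, rfl⟩), section32_eight_ne_five hn hmod hx hy,
    by rw [hxy.inter_eq hn, card_pair hm], hxy.inter_eq hn⟩

theorem card_hyperedges (hn : 21 ≤ n) (hmod : n % 3 = 0) : 3 * #(hyperedges n) = 2 * n := by
  have hdisj : Disjoint ({i ∈ range n | i % 3 = 1}.image fun i : ℕ => section32 (i : Fin n) 8)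
      ({i ∈ range n | i % 3 = 2}.image fun i : ℕ => section32 (i : Fin n) 5) := by
    simp only [disjoint_left, mem_image, mem_filter, mem_range]
    rintro _ h₁ h₂
    obtain ⟨x, hx, rfl⟩ := (Fin.exists_range_natCast_iff (f := (section32 · 8))).1 h₁
    obtain ⟨y, hy, h⟩ := (Fin.exists_range_natCast_iff (f := (section32 · 5))).1 h₂
    exact section32_eight_ne_five hn hmod hx hy h.symm
  rw [hyperedges, card_union_of_disjoint hdisj,
    card_image_of_injOn (injOn_section32 hmod (by norm_num) rfl (by omega)),
    card_image_of_injOn (injOn_section32 hmod (by norm_num) rfl (by omega)),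
    card_filter_range_mod_eq (by omega) (by norm_num),
    card_filter_range_mod_eq (by omega) (by norm_num)]
  omega

end

theorem stmt_12 (n : ℕ) [NeZero n] (hn : 21 ≤ n) (hmod : n % 3 = 0) :
    letI E : Finset (Finset (Fin n)) :=
      (((Finset.range n).filter fun i => i % 3 = 1).image fun i : ℕ =>
        ({(i : Fin n), ((i + 1 : ℕ) : Fin n), ((i + 2 : ℕ) : Fin n),
          ((i + 8 : ℕ) : Fin n), ((i + 9 : ℕ) : Fin n)} : Finset (Fin n))) ∪
      (((Finset.range n).filter fun i => i % 3 = 2).image fun i : ℕ =>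
        ({(i : Fin n), ((i + 1 : ℕ) : Fin n), ((i + 2 : ℕ) : Fin n),
          ((i + 5 : ℕ) : Fin n), ((i + 6 : ℕ) : Fin n)} : Finset (Fin n)))
    EIh E = cyc n ∧ (∀ e ∈ E, IsSection32 e) ∧ 3 * E.card = 2 * n := by
  rw [hyperedges_eq]
  refine ⟨(EIh_hyperedges_subset_cyc hn hmod).antisymm (cyc_subset_EIh_hyperedges hn hmod), ?_,
    card_hyperedges hn hmod⟩
  intro e he
  rcases mem_hyperedges.1 he with ⟨x, -, rfl⟩ | ⟨y, -, rfl⟩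
  · exact isSection32_section32 x (by norm_num) (by omega)
  · exact isSection32_section32 y (by norm_num) (by omega)
end
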